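/- The thirty-six unordered pairs listed as edges of the link graph Λ₁ of X₁ are pairwise distinct, and the simple graph Λ₁ contains no cycle of length 3. Hence the link of the vertex of X₁ is large (no circuits of length less than 4) and the squared complex X₁ is non-positively curved. -/
import Mathlib


/-- Vertices of the link graph `Λ₁` of `X₁`: `(false, i, ε)` stands for `a_i⁺`/`a_i⁻`
(according to `ε = true`/`false`) and `(true, i, ε)` stands for `b_i⁺`/`b_i⁻`. -/
abbrev Link1V : Type := Bool × Fin 5 × Bool

/-- `a_i⁺`. -/
def aP (i : Fin 5) : Link1V := (false, i, true)
/-- `a_i⁻`. -/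
def aM (i : Fin 5) : Link1V := (false, i, false)
/-- `b_i⁺`. -/
def bP (i : Fin 5) : Link1V := (true, i, true)
/-- `b_i⁻`. -/
def bM (i : Fin 5) : Link1V := (true, i, false)

/-- The thirty-six edges of the link graph `Λ₁` of the vertex of `X₁`: the sixteen
edges of the `a`-copy of the LOT link, the sixteen edges of the `b`-copy, and the four
new edges contributed by the square with boundary word `a₀ b₂ a₁⁻¹ b₀⁻¹`. -/
def link1Edges : List (Sym2 Link1V) :=
  [ s(aP 1, aM 0), s(aP 1, aP 2), s(aP 2, aP 3), s(aP 3, aM 0),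
    s(aP 0, aP 1), s(aP 2, aM 1), s(aP 3, aM 2), s(aM 0, aM 3),
    s(aP 4, aP 0), s(aP 4, aM 1), s(aP 4, aM 2), s(aP 4, aM 3),
    s(aM 4, aP 0), s(aM 4, aM 1), s(aM 4, aM 2), s(aM 4, aM 3),
    s(bP 1, bM 0), s(bP 1, bP 2), s(bP 2, bP 3), s(bP 3, bM 0),
    s(bP 0, bP 1), s(bP 2, bM 1), s(bP 3, bM 2), s(bM 0, bM 3),
    s(bP 4, bP 0), s(bP 4, bM 1), s(bP 4, bM 2), s(bP 4, bM 3),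
    s(bM 4, bP 0), s(bM 4, bM 1), s(bM 4, bM 2), s(bM 4, bM 3),
    s(aP 0, bM 2), s(bP 2, aP 1), s(aM 1, bP 0), s(bM 0, aM 0) ]

/-- The link graph `Λ₁`. -/
def link1Graph : SimpleGraph Link1V :=
  SimpleGraph.fromEdgeSet {e | e ∈ link1Edges}

instance link1Adj.decRel : DecidableRel link1Graph.Adj := fun x y =>
  decidable_of_iff (s(x, y) ∈ link1Edges ∧ x ≠ y) (by
    rw [link1Graph, SimpleGraph.fromEdgeSet_adj]; exact Iff.rfl)

lemma link1_no_triangle : ∀ x y z : Link1V,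
    link1Graph.Adj x y → link1Graph.Adj y z → link1Graph.Adj z x → False := by decide

lemma walk3 {u v : Link1V} (w : link1Graph.Walk u v) (h : w.length = 3) :
    ∃ x y, link1Graph.Adj u x ∧ link1Graph.Adj x y ∧ link1Graph.Adj y v := by
  match w, h with
  | .cons h1 (.cons h2 (.cons h3 .nil)), _ => exact ⟨_, _, h1, h2, h3⟩

lemma link1_no3 (v : Link1V) (w : link1Graph.Walk v v) (_ : w.IsCycle) :
    w.length ≠ 3 := by
  intro h
  obtain ⟨x, y, h1, h2, h3⟩ := walk3 w h
  exact link1_no_triangle v x y h1 h2 h3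

/-- The thirty-six unordered pairs listed as edges of `Λ₁` are pairwise
distinct, and `Λ₁` contains no cycle of length 3.  Hence the link of the vertex of
`X₁` is large (no circuits of length less than 4). -/
theorem link1_is_large :
    link1Edges.Nodup ∧
    (∀ (v : Link1V) (w : link1Graph.Walk v v), w.IsCycle → w.length ≠ 3) ∧
    (∀ (v : Link1V) (w : link1Graph.Walk v v), w.IsCycle → 4 ≤ w.length) := by
  refine ⟨by decide, link1_no3, fun v w hw => ?_⟩
  have h3 := hw.three_le_length
  have := link1_no3 v w hw
  omega
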